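/- In dimension one, for all t > 0 and x, v, w ∈ ℝ, the minimum over s₁, s₂, s₃ ≥ 0 with s₁ + s₂ + s₃ ≤ t of K(s₁,s₂,s₃) := (x − s₁w − s₃v)²/(2s₂²) + s₁ + s₂ + s₃ (with the convention that the fraction equals the indicator 0_{x = s₁w + s₃v} when s₂ = 0) equals min( μ(t,x;v), μ(t,x;w) ), where μ(t,x;u) := min over s₁,s₂ ≥ 0, s₁+s₂ ≤ t of (x − s₁u)²/(2s₂²) + s₁ + s₂ (same convention at s₂ = 0). -/
import Mathlib


open scoped ENNReal Classical

/-- `y²/(2 s²)` with the convention `0_{y = 0}` when `s = 0`. -/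
noncomputable def fracE (y s : ℝ) : ℝ≥0∞ :=
  if s = 0 then (if y = 0 then 0 else ⊤) else ENNReal.ofReal (y ^ 2 / (2 * s ^ 2))

/-- `μ(t,x;u) = min_{s₁,s₂ ≥ 0, s₁+s₂ ≤ t} ( (x-s₁u)²/(2s₂²) + s₁ + s₂ )`. -/
noncomputable def muE (t x u : ℝ) : ℝ≥0∞ :=
  sInf {m : ℝ≥0∞ | ∃ s₁ s₂ : ℝ, 0 ≤ s₁ ∧ 0 ≤ s₂ ∧ s₁ + s₂ ≤ t ∧
    m = fracE (x - s₁ * u) s₂ + ENNReal.ofReal (s₁ + s₂)}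

/-- `min K` over the simplex `{s₁,s₂,s₃ ≥ 0, s₁+s₂+s₃ ≤ t}`, with
`K(s₁,s₂,s₃) = (x−s₁w−s₃v)²/(2s₂²) + s₁+s₂+s₃`. -/
noncomputable def KInf (t x v w : ℝ) : ℝ≥0∞ :=
  sInf {m : ℝ≥0∞ | ∃ s₁ s₂ s₃ : ℝ, 0 ≤ s₁ ∧ 0 ≤ s₂ ∧ 0 ≤ s₃ ∧ s₁ + s₂ + s₃ ≤ t ∧
    m = fracE (x - s₁ * w - s₃ * v) s₂ + ENNReal.ofReal (s₁ + s₂ + s₃)}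

lemma fracE_mono' {y₁ y₂ : ℝ} (s : ℝ) (h : y₁ ^ 2 ≤ y₂ ^ 2) : fracE y₁ s ≤ fracE y₂ s := by
  rcases eq_or_ne s 0 with hs | hs
  · subst hs
    by_cases h2 : y₂ = 0
    · have h1 : y₁ = 0 := by
        have : y₁ ^ 2 = 0 := le_antisymm (by simpa [h2] using h) (sq_nonneg _)
        exact pow_eq_zero_iff (by norm_num) |>.mp this
      simp [fracE, h1, h2]
    · simp [fracE, h2]
  · simp only [fracE, if_neg hs]
    apply ENNReal.ofReal_le_ofReal
    have hpos : (0:ℝ) < 2 * s ^ 2 := by positivity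
    exact div_le_div_of_nonneg_right h hpos.le |>.trans_eq rfl

lemma fracE_zero' (s : ℝ) : fracE 0 s = 0 := by
  unfold fracE; split_ifs <;> simp_all

lemma muE_le' (t x u s₁ s₂ : ℝ) (h1 : 0 ≤ s₁) (h2 : 0 ≤ s₂) (h3 : s₁ + s₂ ≤ t) :
    muE t x u ≤ fracE (x - s₁ * u) s₂ + ENNReal.ofReal (s₁ + s₂) :=
  sInf_le ⟨s₁, s₂, h1, h2, h3, rfl⟩

lemma key_ineq (a b y s₁ s₃ : ℝ) (h1 : 0 ≤ s₁) (h3 : 0 ≤ s₃) (hS : 0 < s₁ + s₃)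
    (hab : 0 < a * b) (hab2 : a ^ 2 ≤ b ^ 2) (hkey : (s₁ + s₃) * y = s₃ * a + s₁ * b) :
    a ^ 2 ≤ y ^ 2 := by
  have habge : a ^ 2 ≤ a * b := by
    rcases lt_trichotomy a 0 with hc | hc | hc
    · have hbneg : b < 0 := by nlinarith
      have : b ≤ a := by nlinarith
      nlinarith
    · simp [hc]
    · have hbpos : 0 < b := by nlinarith
      have : a ≤ b := by nlinarith
      nlinarith
  have hkey2 : (s₁ + s₃) ^ 2 * y ^ 2 = (s₃ * a + s₁ * b) ^ 2 := by
    rw [← mul_pow, hkey]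
  have hX : 0 ≤ s₁ * s₃ * (a * b - a ^ 2) :=
    mul_nonneg (mul_nonneg h1 h3) (by linarith)
  have hY : 0 ≤ s₁ ^ 2 * (b ^ 2 - a ^ 2) :=
    mul_nonneg (sq_nonneg _) (by linarith)
  have hfin : (s₁ + s₃) ^ 2 * a ^ 2 ≤ (s₁ + s₃) ^ 2 * y ^ 2 := by nlinarith [hkey2, hX, hY]
  have hp : (0:ℝ) < (s₁ + s₃) ^ 2 := by positivity
  exact le_of_mul_le_mul_left hfin hp

theorem stmt_7 (t x v w : ℝ) (ht : 0 < t) :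
    KInf t x v w = min (muE t x v) (muE t x w) := by
  apply le_antisymm
  · apply le_min
    · apply le_sInf
      rintro m ⟨s₁, s₂, h1, h2, h3, rfl⟩
      apply sInf_le
      refine ⟨0, s₂, s₁, le_refl 0, h2, h1, by linarith, ?_⟩
      rw [show x - 0 * w - s₁ * v = x - s₁ * v by ring, show (0:ℝ) + s₂ + s₁ = s₁ + s₂ by ring]
    · apply le_sInf
      rintro m ⟨s₁, s₂, h1, h2, h3, rfl⟩
      apply sInf_le
      refine ⟨s₁, s₂, 0, h1, h2, le_refl 0, by linarith, ?_⟩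
      rw [show x - s₁ * w - 0 * v = x - s₁ * w by ring, show s₁ + s₂ + 0 = s₁ + s₂ by ring]
  · apply le_sInf
    rintro m ⟨s₁, s₂, s₃, h1, h2, h3, h4, rfl⟩
    obtain ⟨S, hS⟩ : ∃ S : ℝ, S = s₁ + s₃ := ⟨_, rfl⟩
    have hS0 : 0 ≤ S := by linarith
    obtain ⟨y, hy⟩ : ∃ y : ℝ, y = x - s₁ * w - s₃ * v := ⟨_, rfl⟩
    obtain ⟨a, ha⟩ : ∃ a : ℝ, a = x - S * v := ⟨_, rfl⟩
    obtain ⟨b, hb⟩ : ∃ b : ℝ, b = x - S * w := ⟨_, rfl⟩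
    rw [show x - s₁ * w - s₃ * v = y from hy.symm]
    by_cases hcase : ∃ σ, 0 ≤ σ ∧ σ ≤ S ∧ x = σ * w + (S - σ) * v
    · obtain ⟨σ, hσ0, hσS, hσx⟩ := hcase
      have hbet : (x - S * v) * (x - S * w) ≤ 0 := by
        have hid : (x - S * v) * (x - S * w) = -(σ * (S - σ) * (w - v) ^ 2) := by
          rw [hσx]; ring
        rw [hid, neg_nonpos]
        exact mul_nonneg (mul_nonneg hσ0 (by linarith)) (sq_nonneg _)
      have hex : ∃ s' u, 0 ≤ s' ∧ s' ≤ S ∧ (u = v ∨ u = w) ∧ x = s' * u := by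
        rcases lt_trichotomy x 0 with hx | hx | hx
        · rcases le_or_gt (S * v) x with hv' | hv'
          · have hvneg : v < 0 := by nlinarith
            exact ⟨x / v, v, (by rw [← neg_div_neg_eq]; exact div_nonneg (by linarith) (by linarith)),
              (div_le_iff_of_neg hvneg).mpr (by linarith), Or.inl rfl,
              (div_mul_cancel₀ x hvneg.ne).symm⟩
          · have hw' : S * w ≤ x := by nlinarith
            have hwneg : w < 0 := by nlinarith
            exact ⟨x / w, w, (by rw [← neg_div_neg_eq]; exact div_nonneg (by linarith) (by linarith)),
              (div_le_iff_of_neg hwneg).mpr (by linarith), Or.inr rfl,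
              (div_mul_cancel₀ x hwneg.ne).symm⟩
        · exact ⟨0, v, le_refl 0, hS0, Or.inl rfl, by rw [hx, zero_mul]⟩
        · rcases le_or_gt x (S * v) with hv' | hv'
          · have hvpos : 0 < v := by nlinarith
            exact ⟨x / v, v, by positivity,
              (div_le_iff₀ hvpos).mpr (by linarith), Or.inl rfl,
              (div_mul_cancel₀ x hvpos.ne').symm⟩
          · have hw' : x ≤ S * w := by nlinarith
            have hwpos : 0 < w := by nlinarith
            exact ⟨x / w, w, by positivity,
              (div_le_iff₀ hwpos).mpr (by linarith), Or.inr rfl,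
              (div_mul_cancel₀ x hwpos.ne').symm⟩
      obtain ⟨s', u, hs'0, hs'S, hu, hxu⟩ := hex
      have hmu : muE t x u ≤ ENNReal.ofReal (s₁ + s₂ + s₃) := by
        calc muE t x u ≤ fracE (x - s' * u) s₂ + ENNReal.ofReal (s' + s₂) :=
              muE_le' t x u s' s₂ hs'0 h2 (by linarith)
          _ = ENNReal.ofReal (s' + s₂) := by
              rw [show x - s' * u = 0 by rw [hxu]; ring, fracE_zero', zero_add]
          _ ≤ ENNReal.ofReal (s₁ + s₂ + s₃) := ENNReal.ofReal_le_ofReal (by linarith)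
      have hmm : min (muE t x v) (muE t x w) ≤ muE t x u := by
        rcases hu with rfl | rfl
        · exact min_le_left _ _
        · exact min_le_right _ _
      exact hmm.trans (hmu.trans (self_le_add_left _ _))
    · push_neg at hcase
      have ha0 : a ≠ 0 := by
        intro h
        apply hcase 0 le_rfl hS0
        rw [show (0:ℝ) * w + (S - 0) * v = S * v by ring]
        linarith [ha ▸ h]
      have hb0 : b ≠ 0 := by
        intro h
        apply hcase S hS0 le_rfl
        rw [show S * w + (S - S) * v = S * w by ring]
        linarith [hb ▸ h]
      have hab : 0 < a * b := by
        rcases lt_trichotomy (a * b) 0 with h | h | h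
        · exfalso
          have hvw : w ≠ v := by
            intro hvw
            have : a = b := by rw [ha, hb, hvw]
            nlinarith [sq_nonneg a, this ▸ h]
          have hwvne : w - v ≠ 0 := sub_ne_zero.mpr hvw
          have hσwv : a / (w - v) * (w - v) = a := div_mul_cancel₀ a hwvne
          have hbσ : b = a - S * (w - v) := by rw [ha, hb]; ring
          set σ : ℝ := a / (w - v)
          have hprod : σ * (σ - S) * (w - v) ^ 2 < 0 := by
            have hid : σ * (σ - S) * (w - v) ^ 2 = a * b := by
              rw [hbσ]
              linear_combination (σ * (w - v) + a - S * (w - v)) * hσwv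
            rw [hid]; exact h
          have h2' : σ * (σ - S) < 0 := by
            by_contra hc
            push_neg at hc
            nlinarith [mul_nonneg hc (sq_nonneg (w - v))]
          have hσpos : 0 < σ := by
            by_contra hc
            push_neg at hc
            nlinarith [mul_nonneg (neg_nonneg.mpr hc) (by linarith : (0:ℝ) ≤ S - σ)]
          have hσS : σ < S := by
            by_contra hc
            push_neg at hc
            nlinarith [mul_nonneg hσpos.le (by linarith : (0:ℝ) ≤ σ - S)]
          apply hcase σ hσpos.le hσS.le
          have : x - σ * w - (S - σ) * v = a - σ * (w - v) := by rw [ha]; ring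
          have hz : x - σ * w - (S - σ) * v = 0 := by rw [this, ← hσwv]; ring
          linarith
        · exact absurd h (mul_ne_zero ha0 hb0)
        · exact h
      have hkey : (s₁ + s₃) * y = s₃ * a + s₁ * b := by rw [hy, ha, hb, hS]; ring
      have hmin : a ^ 2 ≤ y ^ 2 ∨ b ^ 2 ≤ y ^ 2 := by
        rcases eq_or_lt_of_le hS0 with hS' | hSpos
        · left
          have hs1 : s₁ = 0 := by linarith
          have hs3 : s₃ = 0 := by linarith
          have hay : a = y := by rw [ha, hy, hs1, hs3, ← hS']; ring
          rw [hay]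
        · have hSsum : 0 < s₁ + s₃ := by linarith
          rcases le_total (a ^ 2) (b ^ 2) with hab2 | hab2
          · exact Or.inl (key_ineq a b y s₁ s₃ h1 h3 hSsum hab hab2 hkey)
          · refine Or.inr (key_ineq b a y s₃ s₁ h3 h1 (by linarith) (by linarith [mul_comm a b]) hab2 ?_)
            linarith [hkey]
      rcases hmin with hm | hm
      · refine (min_le_left _ _).trans ?_
        calc muE t x v ≤ fracE (x - S * v) s₂ + ENNReal.ofReal (S + s₂) :=
              muE_le' t x v S s₂ hS0 h2 (by linarith)
          _ ≤ fracE y s₂ + ENNReal.ofReal (s₁ + s₂ + s₃) :=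
              add_le_add (ha ▸ fracE_mono' s₂ hm) (ENNReal.ofReal_le_ofReal (by linarith))
      · refine (min_le_right _ _).trans ?_
        calc muE t x w ≤ fracE (x - S * w) s₂ + ENNReal.ofReal (S + s₂) :=
              muE_le' t x w S s₂ hS0 h2 (by linarith)
          _ ≤ fracE y s₂ + ENNReal.ofReal (s₁ + s₂ + s₃) :=
              add_le_add (hb ▸ fracE_mono' s₂ hm) (ENNReal.ofReal_le_ofReal (by linarith))
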